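/- arXiv:2603.16214 — 3 statements merged into one kernel-verified Lean document; each statement's English description precedes it below -/
import Mathlib

section
/- Let H be an N×N positive definite Hermitian matrix with eigenvalues μ₁, …, μ_N, and m ≥ 1 an integer. Define the Nm×Nm block matrix 𝒢 with blocks 𝒢_{t,t+1} = I_N for 1 ≤ t ≤ m−1, 𝒢_{m,1} = H, and zero elsewhere. Then 𝒢 is diagonalizable and its eigenvalues are exactly the numbers e^{2πik/m} μ_j^{1/m} for 1 ≤ j ≤ N and 0 ≤ k ≤ m−1. -/
open scoped Matrix ComplexOrder

/-!
If `H u = λ^m u`, the block vector `(u, λ u, …, λ^(m-1) u)` is an eigenvector of `𝒢` for `λ`: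
the identity blocks shift it by one power of `λ`, and the corner block `H` closes the cycle.
Taking `λ = ζ^k μ_j^(1/m)` for a primitive `m`-th root of unity `ζ` and an eigenbasis `u_j` of `H`
gives `Nm` eigenvectors. The matrix they form has an explicit left inverse, by discrete Fourier
inversion in the block index (`∑_t ζ^((k'-k)t) = m δ_{kk'}`), so `𝒢` is conjugate to the diagonal
matrix of the `λ`'s, which is also its spectrum.
-/

open Matrix

section CommRing

variable {R : Type*} [CommRing R] {n : Type*} [Fintype n] [DecidableEq n] {m : ℕ}

def gadget (m : ℕ) (H : Matrix n n R) : Matrix (Fin m × n) (Fin m × n) R :=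
  of fun p q => if (p.1 : ℕ) + 1 = q.1 then (1 : Matrix n n R) p.2 q.2
    else if (p.1 : ℕ) = m - 1 ∧ (q.1 : ℕ) = 0 then H p.2 q.2 else 0

theorem gadget_mulVec_geom_eq_smul {H : Matrix n n R} {c : R} {u : n → R}
    (hu : H *ᵥ u = c ^ m • u) :
    gadget m H *ᵥ (fun p => c ^ (p.1 : ℕ) * u p.2) = c • fun p => c ^ (p.1 : ℕ) * u p.2 := by
  ext ⟨t, i⟩
  simp only [mulVec, dotProduct, gadget, of_apply, Fintype.sum_prod_type, Pi.smul_apply,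
    smul_eq_mul]
  by_cases ht : (t : ℕ) + 1 < m
  · have hlast : (t : ℕ) ≠ m - 1 := by omega
    rw [Finset.sum_eq_single ⟨t + 1, ht⟩]
    · simp only [↓reduceIte, one_apply, pow_succ, ite_mul, one_mul, zero_mul, Finset.sum_ite_eq,
        Finset.mem_univ]
      ring
    · intro s _ hs
      have hts : (t : ℕ) + 1 ≠ s := fun h => hs (Fin.ext h.symm)
      simp [hts, hlast]
    · simp
  · have hlast : (t : ℕ) = m - 1 := by omega
    have hHu := congrFun hu i
    simp only [mulVec, dotProduct, Pi.smul_apply, smul_eq_mul] at hHu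
    rw [Finset.sum_eq_single ⟨0, by omega⟩]
    · simp only [hlast, Nat.add_eq_zero_iff, one_ne_zero, and_false, ↓reduceIte, and_self,
        pow_zero, one_mul, hHu]
      rw [← mul_assoc, ← pow_succ', Nat.sub_add_cancel (by omega)]
    · intro s _ hs
      have hs0 : (s : ℕ) ≠ 0 := fun h => hs (Fin.ext h)
      have hts : (t : ℕ) + 1 ≠ s := by omega
      simp [hts, hs0]
    · simp

def gadgetEigenvalue (ζ : R) (r : n → R) (q : Fin m × n) : R := ζ ^ (q.1 : ℕ) * r q.2

def gadgetEigenvectorMatrix (ζ : R) (r : n → R) (U : Matrix n n R) :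
    Matrix (Fin m × n) (Fin m × n) R :=
  of fun p q => gadgetEigenvalue ζ r q ^ (p.1 : ℕ) * U p.2 q.2

theorem gadget_mul_gadgetEigenvectorMatrix {H U : Matrix n n R} {ζ : R} {r : n → R}
    (hζ : ζ ^ m = 1) (hHU : H * U = U * diagonal (fun j => r j ^ m)) :
    gadget m H * gadgetEigenvectorMatrix ζ r U =
      gadgetEigenvectorMatrix ζ r U * diagonal (gadgetEigenvalue ζ r) := by
  ext p q
  have hcol : H *ᵥ (fun i => U i q.2) = gadgetEigenvalue ζ r q ^ m • fun i => U i q.2 := by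
    ext i
    have hHU_iq := congrFun (congrFun hHU i) q.2
    rw [mul_apply, mul_diagonal] at hHU_iq
    rw [gadgetEigenvalue, mul_pow, ← pow_mul, mul_comm _ m, pow_mul, hζ, one_pow, one_mul]
    simpa [mulVec, dotProduct, mul_comm] using hHU_iq
  rw [mul_diagonal, mul_comm]
  exact congrFun (gadget_mulVec_geom_eq_smul hcol) p

end CommRing

theorem IsPrimitiveRoot.sum_div_pow_pow {K : Type*} [Field K] {ζ : K} {m : ℕ}
    (hζ : IsPrimitiveRoot ζ m) (k k' : Fin m) :
    ∑ t : Fin m, (ζ ^ (k' : ℕ) / ζ ^ (k : ℕ)) ^ (t : ℕ) = if k = k' then (m : K) else 0 := by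
  have hζ0 : ζ ≠ 0 := hζ.ne_zero k.pos.ne'
  split_ifs with hk
  · simp [hk, div_self (pow_ne_zero _ hζ0)]
  · have hx : ζ ^ (k' : ℕ) / ζ ^ (k : ℕ) ≠ 1 := by
      rw [Ne, div_eq_one_iff_eq (pow_ne_zero _ hζ0)]
      exact fun h => hk (Fin.ext (hζ.pow_inj k'.2 k.2 h).symm)
    have hxm : (ζ ^ (k' : ℕ) / ζ ^ (k : ℕ)) ^ m = 1 := by
      rw [div_pow, pow_right_comm ζ (k' : ℕ), pow_right_comm ζ (k : ℕ), hζ.pow_eq_one, one_pow,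
        one_pow, div_one]
    rw [Fin.sum_univ_eq_sum_range (fun t => (ζ ^ (k' : ℕ) / ζ ^ (k : ℕ)) ^ t), geom_sum_eq hx,
      hxm, sub_self, zero_div]

theorem Matrix.spectrum_mul_diagonal_mul_inv {K n : Type*} [Field K] [Fintype n] [DecidableEq n]
    {P : Matrix n n K} (hP : IsUnit P.det) (d : n → K) :
    spectrum K (P * diagonal d * P⁻¹) = Set.range d := by
  obtain ⟨u, rfl⟩ := (isUnit_iff_isUnit_det P).mpr hP
  rw [← coe_units_inv, spectrum.units_conjugate, spectrum_diagonal]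

theorem Matrix.IsHermitian.mul_eigenvectorUnitary {𝕜 n : Type*} [RCLike 𝕜] [Fintype n]
    [DecidableEq n] {A : Matrix n n 𝕜} (hA : A.IsHermitian) :
    A * (hA.eigenvectorUnitary : Matrix n n 𝕜) =
      (hA.eigenvectorUnitary : Matrix n n 𝕜) * diagonal (RCLike.ofReal ∘ hA.eigenvalues) := by
  set U := (hA.eigenvectorUnitary : Matrix n n 𝕜)
  have hA' := hA.spectral_theorem
  rw [Unitary.conjStarAlgAut_apply] at hA'
  calc A * U = U * diagonal (RCLike.ofReal ∘ hA.eigenvalues) * star U * U := congrArg (· * U) hA'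
    _ = U * diagonal (RCLike.ofReal ∘ hA.eigenvalues) := by
      rw [mul_assoc, Unitary.coe_star_mul_self, mul_one]

section Field

variable {K : Type*} [Field K] {n : Type*} [Fintype n] [DecidableEq n] {m : ℕ}

theorem isUnit_det_gadgetEigenvectorMatrix {ζ : K} (hζ : IsPrimitiveRoot ζ m) {r : n → K}
    (hr : ∀ j, r j ≠ 0) {U : Matrix n n K} (hU : IsUnit U.det) :
    IsUnit (gadgetEigenvectorMatrix ζ r U : Matrix (Fin m × n) (Fin m × n) K).det := by
  rcases Nat.eq_zero_or_pos m with rfl | hm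
  · simp
  have := NeZero.of_pos hm
  have hm0 : (m : K) ≠ 0 := hζ.neZero'.out
  have hUU : U⁻¹ * U = 1 := nonsing_inv_mul U hU
  set c : Fin m × n → K := gadgetEigenvalue ζ r
  refine isUnit_det_of_left_inverse
    (B := of fun q p => (m : K)⁻¹ * (c q ^ (p.1 : ℕ))⁻¹ * U⁻¹ q.2 p.2) ?_
  ext ⟨k, j⟩ ⟨k', j'⟩
  calc _ = (m : K)⁻¹ * ∑ t : Fin m, (c (k', j') / c (k, j)) ^ (t : ℕ) * (U⁻¹ * U) j j' := by
        simp only [mul_apply, of_apply, gadgetEigenvectorMatrix, Fintype.sum_prod_type,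
          Finset.mul_sum, div_pow]
        refine Finset.sum_congr rfl fun t _ => Finset.sum_congr rfl fun i _ => ?_
        ring
    _ = (1 : Matrix (Fin m × n) (Fin m × n) K) (k, j) (k', j') := by
        rw [hUU]
        by_cases hj : j = j'
        · subst hj
          have hc : c (k', j) / c (k, j) = ζ ^ (k' : ℕ) / ζ ^ (k : ℕ) :=
            mul_div_mul_right _ _ (hr j)
          simp only [hc, one_apply_eq, mul_one]
          rw [hζ.sum_div_pow_pow, one_apply]
          by_cases hk : k = k' <;> simp [hk, hm0]
        · simp [one_apply, hj]

theorem gadget_eq_conj_diagonal {H U : Matrix n n K} {ζ : K} (hζ : IsPrimitiveRoot ζ m)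
    {r : n → K} (hr : ∀ j, r j ≠ 0) (hU : IsUnit U.det)
    (hHU : H * U = U * diagonal (fun j => r j ^ m)) :
    gadget m H = gadgetEigenvectorMatrix ζ r U * diagonal (gadgetEigenvalue ζ r) *
      (gadgetEigenvectorMatrix ζ r U)⁻¹ := by
  rw [← gadget_mul_gadgetEigenvectorMatrix hζ.pow_eq_one hHU,
    mul_nonsing_inv_cancel_right _ _ (isUnit_det_gadgetEigenvectorMatrix hζ hr hU)]

end Field

theorem Matrix.IsHermitian.range_gadgetEigenvalue_exp_rpow {n : Type*} [Fintype n]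
    [DecidableEq n] {m : ℕ} {H : Matrix n n ℂ} (hH : H.IsHermitian) :
    Set.range (gadgetEigenvalue (m := m) (Complex.exp (2 * Real.pi * Complex.I / m))
        fun j => ((hH.eigenvalues j ^ ((1 : ℝ) / m) : ℝ) : ℂ)) =
      {lam : ℂ | ∃ μ : ℝ, (μ : ℂ) ∈ spectrum ℂ H ∧ ∃ k : Fin m,
        lam = Complex.exp (2 * Real.pi * Complex.I * k / m) * ((μ ^ ((1 : ℝ) / m) : ℝ) : ℂ)} := by
  have hζk (k : Fin m) : Complex.exp (2 * Real.pi * Complex.I / m) ^ (k : ℕ) =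
      Complex.exp (2 * Real.pi * Complex.I * k / m) := by
    rw [← Complex.exp_nat_mul]
    ring_nf
  ext z
  simp only [Set.mem_range, Prod.exists, gadgetEigenvalue, hζk, hH.spectrum_eq_image_range,
    Set.mem_image, Set.mem_ofPred_eq]
  constructor
  · rintro ⟨k, j, rfl⟩
    exact ⟨_, ⟨_, ⟨j, rfl⟩, rfl⟩, k, rfl⟩
  · rintro ⟨μ, ⟨_, ⟨j, rfl⟩, hμ⟩, k, rfl⟩
    obtain rfl : hH.eigenvalues j = μ := Complex.ofReal_injective hμ
    exact ⟨k, j, rfl⟩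

/-- Let `H` be an `N × N` positive definite Hermitian matrix and `m ≥ 1`.
The `Nm × Nm` block companion-type matrix `𝒢` (blocks `𝒢_{t,t+1} = I_N`, `𝒢_{m,1} = H`,
zero elsewhere) is diagonalizable, and its eigenvalues are exactly the numbers
`e^{2πik/m} μ^{1/m}` where `μ` ranges over the (positive real) eigenvalues of `H`
and `0 ≤ k ≤ m-1`. -/
theorem gadget_diagonalizable_and_eigenvalues (N m : ℕ) (hm : 1 ≤ m)
    (H : Matrix (Fin N) (Fin N) ℂ) (hH : H.PosDef) :
    (∃ (P D : Matrix (Fin m × Fin N) (Fin m × Fin N) ℂ), IsUnit P.det ∧ D.IsDiag ∧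
        Matrix.of (fun p q : Fin m × Fin N =>
          if (p.1 : ℕ) + 1 = (q.1 : ℕ) then (if p.2 = q.2 then (1 : ℂ) else 0)
          else if (p.1 : ℕ) = m - 1 ∧ (q.1 : ℕ) = 0 then H p.2 q.2 else 0)
          = P * D * P⁻¹) ∧
      spectrum ℂ (Matrix.of (fun p q : Fin m × Fin N =>
          if (p.1 : ℕ) + 1 = (q.1 : ℕ) then (if p.2 = q.2 then (1 : ℂ) else 0)
          else if (p.1 : ℕ) = m - 1 ∧ (q.1 : ℕ) = 0 then H p.2 q.2 else 0)) =
        {lam : ℂ | ∃ μ : ℝ, (μ : ℂ) ∈ spectrum ℂ H ∧ ∃ k : Fin m,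
          lam = Complex.exp (2 * Real.pi * Complex.I * k / m) * ((μ ^ ((1 : ℝ) / m) : ℝ) : ℂ)} := by
  have hm0 : m ≠ 0 := by omega
  have hζ := Complex.isPrimitiveRoot_exp m hm0
  set r : Fin N → ℂ := fun j => ((hH.isHermitian.eigenvalues j ^ ((1 : ℝ) / m) : ℝ) : ℂ)
  set U := (hH.isHermitian.eigenvectorUnitary : Matrix (Fin N) (Fin N) ℂ)
  have hr : ∀ j, r j ≠ 0 := fun j =>
    Complex.ofReal_ne_zero.mpr (Real.rpow_pos_of_pos (hH.eigenvalues_pos j) _).ne'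
  have hU : IsUnit U.det := isUnit_det_of_left_inverse (Unitary.coe_star_mul_self _)
  have hHU : H * U = U * diagonal (fun j => r j ^ m) := by
    have hrm : (fun j => r j ^ m) = RCLike.ofReal ∘ hH.isHermitian.eigenvalues := funext fun j => by
      simp [r, ← Complex.ofReal_pow, Real.rpow_inv_natCast_pow (hH.eigenvalues_pos j).le hm0]
    rw [hrm]
    exact hH.isHermitian.mul_eigenvectorUnitary
  have hG := gadget_eq_conj_diagonal hζ hr hU hHU
  have hP := isUnit_det_gadgetEigenvectorMatrix hζ hr hU
  refine ⟨⟨_, _, hP, isDiag_diagonal _, hG⟩, ?_⟩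
  change spectrum ℂ (gadget m H) = _
  rw [hG, spectrum_mul_diagonal_mul_inv hP]
  exact hH.isHermitian.range_gadgetEigenvalue_exp_rpow
end

section
/- For ε > 0, the ε-pseudospectrum of H(1) = X − iZ (i.e. the set of z ∈ ℂ with smallest singular value of H(1) − zI at most ε) is exactly the closed disc {z ∈ ℂ : |z| ≤ √(ε² + 2ε)} centered at the origin. -/
/-! With `s = √(1 + |z|²)`, the Gram matrix `A*A` of `A = H(1) - z` has trace `2|z|² + 4` and
determinant `|z|⁴`, so its eigenvalues are `(s - 1)²` and `(s + 1)²`. Hence `A*A - (s - 1)²` is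
positive semidefinite of rank one, which makes `‖A v‖² - (s - 1)² ‖v‖²` a single square (up to the
positive factor `(s - im z) / 2`), and the eigenvector `(s - im z, re z + i)` attains the bound.
Finally `s - 1 ≤ ε ↔ |z|² ≤ ε² + 2ε`. -/

theorem iInf_norm_sphere_eq {𝕜 E F : Type*} [RCLike 𝕜] [NormedAddCommGroup E] [NormedSpace 𝕜 E]
    [SeminormedAddCommGroup F] [NormedSpace 𝕜 F] (T : E →L[𝕜] F) {c : ℝ}
    (hlower : ∀ v, c * ‖v‖ ≤ ‖T v‖) {w : E} (hw : w ≠ 0) (hTw : ‖T w‖ = c * ‖w‖) :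
    ⨅ v : Metric.sphere (0 : E) 1, ‖T v‖ = c := by
  have hw' : ‖w‖ ≠ 0 := norm_ne_zero_iff.mpr hw
  set u : Metric.sphere (0 : E) 1 :=
    ⟨(‖w‖⁻¹ : 𝕜) • w, by simp [norm_smul, inv_mul_cancel₀ hw']⟩
  have hTu : ‖T u‖ = c := by
    simp only [u, map_smul, norm_smul, hTw, norm_inv, RCLike.norm_ofReal, abs_norm]
    field_simp
  have : Nonempty (Metric.sphere (0 : E) 1) := ⟨u⟩
  have hbdd : BddBelow (Set.range fun v : Metric.sphere (0 : E) 1 => ‖T v‖) :=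
    ⟨0, by rintro _ ⟨v, rfl⟩; exact norm_nonneg _⟩
  refine le_antisymm (hTu ▸ ciInf_le hbdd u) (le_ciInf fun v => ?_)
  simpa [norm_eq_of_mem_sphere] using hlower v

theorem norm_sq_toEuclideanCLM_fin_two {𝕜 : Type*} [RCLike 𝕜] (A : Matrix (Fin 2) (Fin 2) 𝕜)
    (v : EuclideanSpace 𝕜 (Fin 2)) :
    ‖Matrix.toEuclideanCLM (𝕜 := 𝕜) A v‖ ^ 2 =
      ‖A 0 0 * v 0 + A 0 1 * v 1‖ ^ 2 + ‖A 1 0 * v 0 + A 1 1 * v 1‖ ^ 2 := by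
  simp [EuclideanSpace.norm_sq_eq, Fin.sum_univ_two, Matrix.ofLp_toEuclideanCLM, Matrix.mulVec,
    dotProduct]

theorem sqrt_one_add_sq_sub_one_le_iff {r ε : ℝ} (hr : 0 ≤ r) (hε : 0 ≤ ε) :
    √(1 + r ^ 2) - 1 ≤ ε ↔ r ≤ √(ε ^ 2 + 2 * ε) := by
  rw [sub_le_iff_le_add', Real.sqrt_le_left (by linarith), Real.le_sqrt hr (by positivity)]
  constructor <;> intro h <;> linarith

theorem sq_sqrt_one_add_norm_sq (z : ℂ) : √(1 + ‖z‖ ^ 2) ^ 2 = 1 + z.re ^ 2 + z.im ^ 2 := by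
  rw [Real.sq_sqrt (by positivity), Complex.sq_norm, Complex.normSq_apply]
  ring

theorem im_lt_sqrt_one_add_norm_sq (z : ℂ) : z.im < √(1 + ‖z‖ ^ 2) := by
  nlinarith [sq_sqrt_one_add_norm_sq z, Real.sqrt_nonneg (1 + ‖z‖ ^ 2), sq_nonneg z.re]

namespace ExceptionalPoint

open Complex

noncomputable abbrev shifted (z : ℂ) : Matrix (Fin 2) (Fin 2) ℂ :=
  !![-I, 1; 1, I] - z • 1

theorem norm_sq_shifted_apply (z : ℂ) (v : EuclideanSpace ℂ (Fin 2)) :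
    ‖Matrix.toEuclideanCLM (𝕜 := ℂ) (shifted z) v‖ ^ 2 =
      normSq ((-I - z) * v 0 + v 1) + normSq (v 0 + (I - z) * v 1) := by
  rw [norm_sq_toEuclideanCLM_fin_two, Complex.sq_norm, Complex.sq_norm]
  simp [shifted]

theorem sqrt_sub_one_mul_norm_le (z : ℂ) (v : EuclideanSpace ℂ (Fin 2)) :
    (√(1 + ‖z‖ ^ 2) - 1) * ‖v‖ ≤ ‖Matrix.toEuclideanCLM (𝕜 := ℂ) (shifted z) v‖ := by
  set s := √(1 + ‖z‖ ^ 2)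
  have hs := sq_sqrt_one_add_norm_sq z
  have hs1 : 1 ≤ s := Real.one_le_sqrt.2 (by simp)
  have hsos : (s - z.im) *
      (‖Matrix.toEuclideanCLM (𝕜 := ℂ) (shifted z) v‖ ^ 2 - (s - 1) ^ 2 * ‖v‖ ^ 2) =
        2 * normSq ((-z.re - I) * v 0 + (s - z.im) * v 1) := by
    rw [norm_sq_shifted_apply, EuclideanSpace.norm_sq_eq, Fin.sum_univ_two, Complex.sq_norm,
      Complex.sq_norm]
    simp only [normSq_apply, add_re, add_im, mul_re, mul_im, sub_re, sub_im, neg_re, neg_im,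
      I_re, I_im, ofReal_re, ofReal_im]
    linear_combination (2 * (v 0).re ^ 2 + 2 * (v 0).im ^ 2
      - (s - z.im) * ((v 0).re ^ 2 + (v 0).im ^ 2 + (v 1).re ^ 2 + (v 1).im ^ 2)) * hs
  have hsq : ((s - 1) * ‖v‖) ^ 2 ≤ ‖Matrix.toEuclideanCLM (𝕜 := ℂ) (shifted z) v‖ ^ 2 := by
    rw [mul_pow, ← sub_nonneg,
      ← mul_nonneg_iff_of_pos_left (sub_pos.2 (im_lt_sqrt_one_add_norm_sq z)), hsos]
    exact mul_nonneg zero_le_two (normSq_nonneg _)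
  exact (pow_le_pow_iff_left₀ (mul_nonneg (by linarith) (norm_nonneg v)) (norm_nonneg _)
    two_ne_zero).1 hsq

theorem exists_norm_shifted_apply_eq (z : ℂ) : ∃ w : EuclideanSpace ℂ (Fin 2), w ≠ 0 ∧
    ‖Matrix.toEuclideanCLM (𝕜 := ℂ) (shifted z) w‖ = (√(1 + ‖z‖ ^ 2) - 1) * ‖w‖ := by
  set s := √(1 + ‖z‖ ^ 2)
  have hs := sq_sqrt_one_add_norm_sq z
  refine ⟨!₂[s - z.im, z.re + I], fun h => ?_, ?_⟩
  · simpa using congrArg (fun w : EuclideanSpace ℂ (Fin 2) => (w 1).im) h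
  have hs1 : 1 ≤ s := Real.one_le_sqrt.2 (by simp)
  refine (sq_eq_sq₀ (norm_nonneg _) (mul_nonneg (by linarith) (norm_nonneg _))).1 ?_
  rw [norm_sq_shifted_apply, mul_pow, EuclideanSpace.norm_sq_eq, Fin.sum_univ_two,
    Complex.sq_norm, Complex.sq_norm]
  simp only [Matrix.cons_val_zero, Matrix.cons_val_one, Matrix.cons_val_fin_one, normSq_apply,
    add_re, add_im, mul_re, mul_im, sub_re, sub_im, neg_re, neg_im, I_re, I_im, ofReal_re,
    ofReal_im]
  linear_combination (-(1 + z.im) ^ 2 - z.re ^ 2 + 2 * s * (1 + z.im) - s ^ 2) * hs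

theorem iInf_norm_shifted_sphere (z : ℂ) :
    ⨅ v : Metric.sphere (0 : EuclideanSpace ℂ (Fin 2)) 1,
      ‖Matrix.toEuclideanCLM (𝕜 := ℂ) (shifted z) v‖ = √(1 + ‖z‖ ^ 2) - 1 :=
  let ⟨_, hw, hTw⟩ := exists_norm_shifted_apply_eq z
  iInf_norm_sphere_eq _ (sqrt_sub_one_mul_norm_le z) hw hTw

end ExceptionalPoint

/-- For `ε > 0`, the `ε`-pseudospectrum of `H(1) = X - iZ`, i.e. the set of
`z ∈ ℂ` such that the smallest singular value of `H(1) - zI` is at most `ε`, is exactly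
the closed disc `{z : |z| ≤ √(ε² + 2ε)}` centered at the origin. -/
theorem pseudospectrum_exceptional_point (ε : ℝ) (hε : 0 < ε) :
    {z : ℂ | (⨅ v : Metric.sphere (0 : EuclideanSpace ℂ (Fin 2)) 1,
        ‖Matrix.toEuclideanCLM (𝕜 := ℂ)
            (Matrix.of ![![(-Complex.I), 1], ![1, Complex.I]]
              - z • (1 : Matrix (Fin 2) (Fin 2) ℂ)) (v : EuclideanSpace ℂ (Fin 2))‖) ≤ ε}
      = {z : ℂ | ‖z‖ ≤ Real.sqrt (ε ^ 2 + 2 * ε)} := by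
  ext z
  rw [Set.mem_ofPred_eq, ExceptionalPoint.iInf_norm_shifted_sphere]
  exact sqrt_one_add_sq_sub_one_le_iff (norm_nonneg z) hε.le
end

section
/- Let σ₀, σ₁, …, σ_{M−1} ∈ [0,1], p₀, …, p_{M−1} ≥ 0 with Σ p_m = 1, and T > 0. Suppose p₀ ≥ 0.8 and let F(θ) = (1/2) Σ_m p_m [e^{−2T²(σ_m−θ)²} + e^{−2T²(σ_m+θ)²}] for θ ∈ [0,1]. Set q = √(log(10/7)/2). Then for every θ ∈ [0,1] with |θ − σ₀| ≤ q/T one has F(θ) ≥ 0.4 e^{−2q²} = 0.28, while for every θ ∈ [0,1] with |θ − σ₀| ≥ 3q/T one has F(θ) ≤ p₀ e^{−18q²} + (1 − p₀) ≤ 0.233. -/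
/-!
Near `σ₀` the `m = 0` Gaussian alone already contributes `p₀ e^{-2q²}/2 ≥ 0.4 e^{-2q²}` to `F`.
Far from `σ₀`, both `m = 0` Gaussians are at most `e^{-18q²}` (since `σ₀ + θ ≥ |θ - σ₀|` for
nonnegative `σ₀, θ`), and every other Gaussian is at most `1`. The choice of `q` makes
`e^{-2q²} = 7/10` and `e^{-18q²} = (7/10)^9`.
-/

open Real Finset

noncomputable def gaussianFilter {ι : Type*} [Fintype ι] (p s : ι → ℝ) (T θ : ℝ) : ℝ :=
  (1 / 2) * ∑ i, p i * (exp (-2 * T ^ 2 * (s i - θ) ^ 2) + exp (-2 * T ^ 2 * (s i + θ) ^ 2))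

lemma exp_neg_two_mul_sq_sqrt_log_div_two {a : ℝ} (ha : 1 ≤ a) (k : ℕ) :
    exp (-(2 * k) * sqrt (log a / 2) ^ 2) = (a ^ k)⁻¹ := by
  rw [sq_sqrt (div_nonneg (log_nonneg ha) zero_le_two),
    show -(2 * (k : ℝ)) * (log a / 2) = -log (a ^ k) by rw [log_pow]; ring,
    exp_neg, exp_log (by positivity)]

lemma exp_neg_two_mul_sq_le_of_abs_le {T c x : ℝ} (hT : 0 < T) (h : |x| ≤ c / T) :
    exp (-2 * c ^ 2) ≤ exp (-2 * T ^ 2 * x ^ 2) := by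
  rw [le_div_iff₀ hT] at h
  have h0 : 0 ≤ |x| * T := by positivity
  have hsq : (|x| * T) ^ 2 ≤ c ^ 2 := pow_le_pow_left₀ h0 h 2
  rw [mul_pow, sq_abs] at hsq
  exact exp_le_exp.2 (by nlinarith)

lemma exp_neg_two_mul_sq_le_of_le_abs {T c x : ℝ} (hT : 0 < T) (hc : 0 ≤ c) (h : c / T ≤ |x|) :
    exp (-2 * T ^ 2 * x ^ 2) ≤ exp (-2 * c ^ 2) := by
  rw [div_le_iff₀ hT] at h
  have hsq : c ^ 2 ≤ (|x| * T) ^ 2 := pow_le_pow_left₀ hc h 2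
  rw [mul_pow, sq_abs] at hsq
  exact exp_le_exp.2 (by nlinarith)

section gaussianFilter

variable {ι : Type*} [Fintype ι] {p : ι → ℝ} (s : ι → ℝ) (T θ : ℝ)

lemma half_mul_exp_le_gaussianFilter (hp : ∀ i, 0 ≤ p i) (j : ι) :
    p j / 2 * exp (-2 * T ^ 2 * (s j - θ) ^ 2) ≤ gaussianFilter p s T θ := by
  have hj := single_le_sum (f := fun i ↦ p i * (exp (-2 * T ^ 2 * (s i - θ) ^ 2) +
    exp (-2 * T ^ 2 * (s i + θ) ^ 2))) (fun i _ ↦ mul_nonneg (hp i) (by positivity)) (mem_univ j)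
  have := mul_nonneg (hp j) (exp_pos (-2 * T ^ 2 * (s j + θ) ^ 2)).le
  unfold gaussianFilter
  linarith

lemma gaussianFilter_le (hp : ∀ i, 0 ≤ p i) (hpsum : ∑ i, p i = 1) {j : ι} {B : ℝ}
    (hminus : exp (-2 * T ^ 2 * (s j - θ) ^ 2) ≤ B) (hplus : exp (-2 * T ^ 2 * (s j + θ) ^ 2) ≤ B) :
    gaussianFilter p s T θ ≤ p j * B + (1 - p j) := by
  classical
  have hexp_le_one (y : ℝ) : exp (-2 * T ^ 2 * y ^ 2) ≤ 1 :=
    exp_le_one_iff.2 (by nlinarith [sq_nonneg T, sq_nonneg y])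
  have hrest : ∑ i ∈ univ.erase j, p i * (exp (-2 * T ^ 2 * (s i - θ) ^ 2) +
      exp (-2 * T ^ 2 * (s i + θ) ^ 2)) ≤ ∑ i ∈ univ.erase j, 2 * p i :=
    sum_le_sum fun i _ ↦ by nlinarith [hp i, hexp_le_one (s i - θ), hexp_le_one (s i + θ)]
  have hj : p j * (exp (-2 * T ^ 2 * (s j - θ) ^ 2) + exp (-2 * T ^ 2 * (s j + θ) ^ 2)) ≤
      p j * (2 * B) :=
    mul_le_mul_of_nonneg_left (by linarith) (hp j)
  rw [← mul_sum, sum_erase_eq_sub (mem_univ j), sum_erase_eq_sub (mem_univ j), hpsum] at hrest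
  unfold gaussianFilter
  linarith

end gaussianFilter

theorem gaussian_filter_peak_separation_general (M : ℕ) (hM : 0 < M)
    (s p : Fin M → ℝ) (hs : ∀ i, s i ∈ Set.Icc (0 : ℝ) 1)
    (hp : ∀ i, 0 ≤ p i) (hpsum : ∑ i, p i = 1) (hp0 : 0.8 ≤ p ⟨0, hM⟩)
    (T : ℝ) (hT : 0 < T) :
    let F : ℝ → ℝ := fun θ => (1 / 2) * ∑ i, p i *
      (Real.exp (-2 * T ^ 2 * (s i - θ) ^ 2) + Real.exp (-2 * T ^ 2 * (s i + θ) ^ 2))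
    let q : ℝ := Real.sqrt (Real.log (10 / 7) / 2)
    (0.4 * Real.exp (-2 * q ^ 2) = 0.28) ∧
    (∀ θ ∈ Set.Icc (0 : ℝ) 1, |θ - s ⟨0, hM⟩| ≤ q / T →
      0.4 * Real.exp (-2 * q ^ 2) ≤ F θ) ∧
    (∀ θ ∈ Set.Icc (0 : ℝ) 1, 3 * q / T ≤ |θ - s ⟨0, hM⟩| →
      F θ ≤ p ⟨0, hM⟩ * Real.exp (-18 * q ^ 2) + (1 - p ⟨0, hM⟩) ∧
        p ⟨0, hM⟩ * Real.exp (-18 * q ^ 2) + (1 - p ⟨0, hM⟩) ≤ 0.233) := by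
  intro F q
  set i₀ : Fin M := ⟨0, hM⟩
  have hq2 : exp (-2 * q ^ 2) = 7 / 10 := by
    rw [show (-2 : ℝ) = -(2 * (1 : ℕ)) by norm_num,
      exp_neg_two_mul_sq_sqrt_log_div_two (by norm_num)]
    norm_num
  have hq18 : exp (-18 * q ^ 2) = (7 / 10) ^ 9 := by
    rw [show (-18 : ℝ) = -(2 * (9 : ℕ)) by norm_num,
      exp_neg_two_mul_sq_sqrt_log_div_two (by norm_num)]
    norm_num
  refine ⟨by rw [hq2]; norm_num, fun θ _ hnear ↦ ?_, fun θ hθ hfar ↦ ⟨?_, ?_⟩⟩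
  · rw [abs_sub_comm] at hnear
    calc 0.4 * exp (-2 * q ^ 2) ≤ p i₀ / 2 * exp (-2 * q ^ 2) := by gcongr; linarith
      _ ≤ p i₀ / 2 * exp (-2 * T ^ 2 * (s i₀ - θ) ^ 2) :=
        mul_le_mul_of_nonneg_left (exp_neg_two_mul_sq_le_of_abs_le hT hnear) (by linarith)
      _ ≤ F θ := half_mul_exp_le_gaussianFilter s T θ hp i₀
  · have hfar' : 3 * q / T ≤ |s i₀ + θ| := by
      rw [abs_of_nonneg (add_nonneg (hs i₀).1 hθ.1)]
      exact hfar.trans (abs_sub_le_iff.2 ⟨by linarith [(hs i₀).1], by linarith [hθ.1]⟩)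
    rw [abs_sub_comm] at hfar
    have h18 : -2 * (3 * q) ^ 2 = -18 * q ^ 2 := by ring
    have hq : 0 ≤ 3 * q := by positivity
    refine gaussianFilter_le s T θ hp hpsum ?_ ?_
    · simpa only [h18] using exp_neg_two_mul_sq_le_of_le_abs hT hq hfar
    · simpa only [h18] using exp_neg_two_mul_sq_le_of_le_abs hT hq hfar'
  · rw [hq18]
    linarith

/-- For singular values `σ_m ∈ [0,1]`, overlaps `p_m ≥ 0` summing to one
with `p₀ ≥ 0.8`, `T > 0`, the idealized Gaussian filter
`F(θ) = (1/2) Σ_m p_m [e^{-2T²(σ_m-θ)²} + e^{-2T²(σ_m+θ)²}]` with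
`q = √(log(10/7)/2)` satisfies: `0.4 e^{-2q²} = 0.28`; for `θ ∈ [0,1]` with
`|θ - σ₀| ≤ q/T`, `F(θ) ≥ 0.4 e^{-2q²}`; and for `θ ∈ [0,1]` with `|θ - σ₀| ≥ 3q/T`,
`F(θ) ≤ p₀ e^{-18q²} + (1 - p₀) ≤ 0.233`. -/
theorem gaussian_filter_peak_separation (M : ℕ) (hM : 0 < M)
    (s p : Fin M → ℝ) (hs : ∀ i, s i ∈ Set.Icc (0 : ℝ) 1)
    (hs0 : ∀ i, s ⟨0, hM⟩ ≤ s i)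
    (hp : ∀ i, 0 ≤ p i) (hpsum : ∑ i, p i = 1) (hp0 : 0.8 ≤ p ⟨0, hM⟩)
    (T : ℝ) (hT : 0 < T) :
    let F : ℝ → ℝ := fun θ => (1 / 2) * ∑ i, p i *
      (Real.exp (-2 * T ^ 2 * (s i - θ) ^ 2) + Real.exp (-2 * T ^ 2 * (s i + θ) ^ 2))
    let q : ℝ := Real.sqrt (Real.log (10 / 7) / 2)
    (0.4 * Real.exp (-2 * q ^ 2) = 0.28) ∧
    (∀ θ ∈ Set.Icc (0 : ℝ) 1, |θ - s ⟨0, hM⟩| ≤ q / T →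
      0.4 * Real.exp (-2 * q ^ 2) ≤ F θ) ∧
    (∀ θ ∈ Set.Icc (0 : ℝ) 1, 3 * q / T ≤ |θ - s ⟨0, hM⟩| →
      F θ ≤ p ⟨0, hM⟩ * Real.exp (-18 * q ^ 2) + (1 - p ⟨0, hM⟩) ∧
        p ⟨0, hM⟩ * Real.exp (-18 * q ^ 2) + (1 - p ⟨0, hM⟩) ≤ 0.233) :=
  gaussian_filter_peak_separation_general M hM s p hs hp hpsum hp0 T hT
end
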